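/- (Fatness lemma) Let S be a connected subset of Z^2 such that (R^+)^{2i}(S) ≠ ∅. Then (R^+)^i(S) has at least i^2/2 elements. -/

import Mathlib

open Set

abbrev Pt := ℤ × ℤ

/-- Adjacency in the graph `G`: neighbor increments
`(0,1), (0,-1), (1,0), (-1,0), (-1,1), (1,-1)`. -/
def adjG (p q : Pt) : Prop :=
  q - p ∈ ({(0,1), (0,-1), (1,0), (-1,0), (-1,1), (1,-1)} : Set Pt)

/-- Reachability within a set `S` along edges of `G`. -/
def ReachIn (S : Set Pt) (p q : Pt) : Prop :=
  Relation.ReflTransGen (fun a b => a ∈ S ∧ b ∈ S ∧ adjG a b) p q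

/-- `S` is connected in the graph `G`. -/
def ConnectedIn (S : Set Pt) : Prop :=
  ∀ p ∈ S, ∀ q ∈ S, ReachIn S p q

/-- The tile with center `p`. -/
def tile (p : Pt) : Set Pt := {p, p + (1, 0), p + (0, 1)}

/-- Inflation operation `Q`. -/
def QOp (S : Set Pt) : Set Pt := ⋃ a ∈ S, tile a

/-- Toom's rule `R`: majority of self, north, east. -/
def ROp (S : Set Pt) : Set Pt := {p | 2 ≤ (S ∩ tile p).ncard}

/-- The biased Toom rule `R⁺ = Q ∘ R ∘ R`. -/
def RPlus (S : Set Pt) : Set Pt := QOp (ROp (ROp S))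

/-!
Since `Q ∘ R ≤ R ∘ Q`, the iterate `(R⁺)^k S` lies between `Q^k (R^{2k} S)` and
`R^{2k} (Q^k S)`. As `R` lowers the span by at least one and `Q` raises it by at most one, a point
of `(R⁺)^{2i} S ⊆ R^{4i} (Q^{2i} S)` forces `span S ≥ 2i`. On a connected set `R` lowers the span
by exactly one, so `R^{2i} S` contains a point `r`; then `(R⁺)^i S ⊇ Q^i {r}`, which contains the
triangle of side `i` with `(i + 1) (i + 2) / 2` points.
-/

lemma mem_tile_iff {x p : Pt} : x ∈ tile p ↔
    (x.1 = p.1 ∧ x.2 = p.2) ∨ (x.1 = p.1 + 1 ∧ x.2 = p.2) ∨ (x.1 = p.1 ∧ x.2 = p.2 + 1) := by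
  simp [tile, Prod.ext_iff]

lemma adjG_iff {a b : Pt} : adjG a b ↔
    (b.1 - a.1 = 0 ∧ b.2 - a.2 = 1) ∨ (b.1 - a.1 = 0 ∧ b.2 - a.2 = -1) ∨
    (b.1 - a.1 = 1 ∧ b.2 - a.2 = 0) ∨ (b.1 - a.1 = -1 ∧ b.2 - a.2 = 0) ∨
    (b.1 - a.1 = -1 ∧ b.2 - a.2 = 1) ∨ (b.1 - a.1 = 1 ∧ b.2 - a.2 = -1) := by
  simp [adjG, Prod.ext_iff]

lemma mem_QOp_iff {x : Pt} {S : Set Pt} : x ∈ QOp S ↔ ∃ a ∈ S, x ∈ tile a := by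
  simp [QOp]

lemma tile_finite (p : Pt) : (tile p).Finite :=
  ((finite_singleton _).insert _).insert _

lemma mem_ROp_iff {S : Set Pt} {p : Pt} :
    p ∈ ROp S ↔ ∃ a ∈ S ∩ tile p, ∃ b ∈ S ∩ tile p, a ≠ b :=
  one_lt_ncard ((tile_finite p).inter_of_right S)

lemma mem_ROp_of_mem_tile {S : Set Pt} {a b p : Pt} (ha : a ∈ S) (hb : b ∈ S)
    (hab : a ≠ b) (hap : a ∈ tile p) (hbp : b ∈ tile p) : p ∈ ROp S :=
  mem_ROp_iff.mpr ⟨a, ⟨ha, hap⟩, b, ⟨hb, hbp⟩, hab⟩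

lemma monotone_QOp : Monotone QOp := fun _ _ h =>
  biUnion_mono h fun _ _ => subset_rfl

lemma monotone_ROp : Monotone ROp := fun _ T h p hp =>
  le_trans hp (ncard_le_ncard (inter_subset_inter_left _ h) ((tile_finite p).inter_of_right T))

lemma QOp_comp_ROp_le : QOp ∘ ROp ≤ ROp ∘ QOp := by
  intro S p hp
  obtain ⟨r, hr, hpr⟩ := mem_QOp_iff.mp hp
  obtain ⟨a, ⟨haS, har⟩, b, ⟨hbS, hbr⟩, hab⟩ := mem_ROp_iff.mp hr
  -- translating the two witnesses by `p - r` moves them into `tile p`, and keeps them in `QOp S`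
  refine mem_ROp_of_mem_tile (a := a + (p - r)) (b := b + (p - r))
    (mem_QOp_iff.mpr ⟨a, haS, ?_⟩) (mem_QOp_iff.mpr ⟨b, hbS, ?_⟩)
    (fun h => hab (by simpa using h)) ?_ ?_ <;>
  · rw [mem_tile_iff] at *
    simp only [Prod.fst_add, Prod.snd_add, Prod.fst_sub, Prod.snd_sub] at *
    omega

/-- `k ≤ span S`, where the span of `S` is the side of the smallest triangle
`{p | x₀ ≤ p.1, y₀ ≤ p.2, p.1 + p.2 ≤ s₀}` containing `S`, namely `s₀ - x₀ - y₀`. -/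
def SpanAtLeast (S : Set Pt) (k : ℤ) : Prop :=
  ∃ a ∈ S, ∃ b ∈ S, ∃ c ∈ S, k ≤ a.1 + a.2 - b.1 - c.2

namespace SpanAtLeast

variable {S T : Set Pt} {k : ℤ}

lemma of_nonempty (hS : S.Nonempty) : SpanAtLeast S 0 := by
  obtain ⟨a, ha⟩ := hS
  exact ⟨a, ha, a, ha, a, ha, by omega⟩

lemma nonempty (h : SpanAtLeast S k) : S.Nonempty := by
  obtain ⟨a, ha, -⟩ := h
  exact ⟨a, ha⟩

lemma nontrivial (h : SpanAtLeast S k) (hk : 0 < k) : S.Nontrivial := by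
  obtain ⟨a, ha, b, hb, c, hc, hspan⟩ := h
  by_contra hS
  have hab := not_nontrivial_iff.mp hS ha hb
  have hac := not_nontrivial_iff.mp hS ha hc
  subst hab hac
  omega

lemma mono (hST : S ⊆ T) (h : SpanAtLeast S k) : SpanAtLeast T k := by
  obtain ⟨a, ha, b, hb, c, hc, hspan⟩ := h
  exact ⟨a, hST ha, b, hST hb, c, hST hc, hspan⟩

lemma of_le {k' : ℤ} (h : SpanAtLeast S k) (hk : k' ≤ k) : SpanAtLeast S k' := by
  obtain ⟨a, ha, b, hb, c, hc, hspan⟩ := h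
  exact ⟨a, ha, b, hb, c, hc, hspan.trans' hk⟩

lemma of_QOp (h : SpanAtLeast (QOp S) k) : SpanAtLeast S (k - 1) := by
  obtain ⟨a, ha, b, hb, c, hc, hspan⟩ := h
  obtain ⟨a', ha', haa'⟩ := mem_QOp_iff.mp ha
  obtain ⟨b', hb', hbb'⟩ := mem_QOp_iff.mp hb
  obtain ⟨c', hc', hcc'⟩ := mem_QOp_iff.mp hc
  rw [mem_tile_iff] at haa' hbb' hcc'
  exact ⟨a', ha', b', hb', c', hc', by omega⟩

/-- Of two distinct points of `tile p`, one avoids `p`, one avoids `p + (1, 0)` and one avoids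
`p + (0, 1)`. -/
lemma of_ROp (h : SpanAtLeast (ROp S) k) : SpanAtLeast S (k + 1) := by
  have key : ∀ p ∈ ROp S, (∃ a ∈ S, p.1 + p.2 + 1 ≤ a.1 + a.2) ∧ (∃ b ∈ S, b.1 ≤ p.1) ∧
      (∃ c ∈ S, c.2 ≤ p.2) := by
    intro p hp
    obtain ⟨a, ⟨haS, hap⟩, b, ⟨hbS, hbp⟩, hab⟩ := mem_ROp_iff.mp hp
    rw [mem_tile_iff] at hap hbp
    rw [Ne, Prod.ext_iff] at hab
    refine ⟨?_, ?_, ?_⟩ <;> rcases hap with h | h | h <;>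
      first | exact ⟨a, haS, by omega⟩ | exact ⟨b, hbS, by omega⟩
  obtain ⟨a, ha, b, hb, c, hc, hspan⟩ := h
  obtain ⟨⟨a', ha', haa'⟩, -, -⟩ := key a ha
  obtain ⟨-, ⟨b', hb', hbb'⟩, -⟩ := key b hb
  obtain ⟨-, -, ⟨c', hc', hcc'⟩⟩ := key c hc
  exact ⟨a', ha', b', hb', c', hc', by omega⟩

lemma of_QOp_iterate (n : ℕ) (h : SpanAtLeast (QOp^[n] S) k) : SpanAtLeast S (k - n) := by
  induction n generalizing S k with
  | zero => simpa using h
  | succ n ih =>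
    rw [Function.iterate_succ_apply] at h
    exact (ih h).of_QOp.of_le (by push_cast; omega)

lemma of_ROp_iterate (n : ℕ) (h : SpanAtLeast (ROp^[n] S) k) : SpanAtLeast S (k + n) := by
  induction n generalizing S k with
  | zero => simpa using h
  | succ n ih =>
    rw [Function.iterate_succ_apply] at h
    exact (ih h).of_ROp.of_le (by push_cast; omega)

end SpanAtLeast

section Connectedness

variable {S : Set Pt}

lemma adjG.ne {a b : Pt} (h : adjG a b) : a ≠ b := by
  rintro rfl
  rw [adjG_iff] at h
  omega

lemma adjG.mem_tile_min {a b : Pt} (h : adjG a b) :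
    a ∈ tile (min a.1 b.1, min a.2 b.2) ∧ b ∈ tile (min a.1 b.1, min a.2 b.2) := by
  rw [adjG_iff] at h
  simp only [mem_tile_iff]
  omega

lemma adjG_of_mem_tile {x p q : Pt} (hp : x ∈ tile p) (hq : x ∈ tile q) (hpq : p ≠ q) :
    adjG p q := by
  rw [mem_tile_iff] at hp hq
  rw [adjG_iff]
  rw [Ne, Prod.ext_iff] at hpq
  omega

lemma reachIn_ROp_of_mem_tile {x p q : Pt} (hp : p ∈ ROp S) (hq : q ∈ ROp S)
    (hxp : x ∈ tile p) (hxq : x ∈ tile q) : ReachIn (ROp S) p q := by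
  rcases eq_or_ne p q with rfl | hpq
  · exact .refl
  · exact .single ⟨hp, hq, adjG_of_mem_tile hxp hxq hpq⟩

lemma ReachIn.lift_ROp {a b p q : Pt} (h : ReachIn S a b) (hp : p ∈ ROp S) (hap : a ∈ tile p)
    (hq : q ∈ ROp S) (hbq : b ∈ tile q) : ReachIn (ROp S) p q := by
  induction h using Relation.ReflTransGen.head_induction_on generalizing p with
  | refl => exact reachIn_ROp_of_mem_tile hp hq hap hbq
  | head hac _ ih =>
    obtain ⟨ha, hc, hadj⟩ := hac
    have hr := mem_ROp_of_mem_tile ha hc hadj.ne hadj.mem_tile_min.1 hadj.mem_tile_min.2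
    exact (reachIn_ROp_of_mem_tile hp hr hap hadj.mem_tile_min.1).trans
      (ih hr hadj.mem_tile_min.2)

lemma connectedIn_ROp (hS : ConnectedIn S) : ConnectedIn (ROp S) := by
  intro p hp q hq
  obtain ⟨a, ⟨haS, hap⟩, -⟩ := mem_ROp_iff.mp hp
  obtain ⟨b, ⟨hbS, hbq⟩, -⟩ := mem_ROp_iff.mp hq
  exact (hS a haS b hbS).lift_ROp hp hap hq hbq

lemma ConnectedIn.exists_adjG (hS : ConnectedIn S) (hnt : S.Nontrivial) {s : Pt} (hs : s ∈ S) :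
    ∃ t ∈ S, adjG s t := by
  obtain ⟨s', hs', hss'⟩ := hnt.exists_ne s
  rcases Relation.ReflTransGen.cases_head (hS s hs s' hs') with h | ⟨t, ⟨-, ht, hadj⟩, -⟩
  · exact absurd h hss'.symm
  · exact ⟨t, ht, hadj⟩

lemma ConnectedIn.subset_QOp_ROp (hS : ConnectedIn S) (hnt : S.Nontrivial) :
    S ⊆ QOp (ROp S) := by
  intro s hs
  obtain ⟨t, ht, hadj⟩ := hS.exists_adjG hnt hs
  exact mem_QOp_iff.mpr ⟨_, mem_ROp_of_mem_tile hs ht hadj.ne hadj.mem_tile_min.1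
    hadj.mem_tile_min.2, hadj.mem_tile_min.1⟩

lemma ConnectedIn.spanAtLeast_ROp {k : ℤ} (hS : ConnectedIn S) (h : SpanAtLeast S (k + 1))
    (hk : 0 ≤ k) : SpanAtLeast (ROp S) k := by
  have hsub := hS.subset_QOp_ROp (h.nontrivial (by omega))
  simpa using (h.mono hsub).of_QOp

lemma ConnectedIn.ROp_iterate_nonempty (n : ℕ) (hS : ConnectedIn S) (h : SpanAtLeast S n) :
    (ROp^[n] S).Nonempty := by
  induction n generalizing S with
  | zero => exact h.nonempty
  | succ n ih =>
    rw [Function.iterate_succ_apply]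
    exact ih (connectedIn_ROp hS) (hS.spanAtLeast_ROp (by exact_mod_cast h) (by positivity))

end Connectedness

lemma QOp_comp_ROp_iterate_le (n : ℕ) : QOp ∘ ROp^[n] ≤ ROp^[n] ∘ QOp :=
  monotone_ROp.le_iterate_comp_of_le QOp_comp_ROp_le n

lemma RPlus_iterate_subset (k : ℕ) (S : Set Pt) : RPlus^[k] S ⊆ ROp^[2 * k] (QOp^[k] S) := by
  induction k with
  | zero => exact subset_rfl
  | succ k ih =>
    calc RPlus^[k + 1] S = QOp (ROp^[2] (RPlus^[k] S)) := Function.iterate_succ_apply' ..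
      _ ⊆ QOp (ROp^[2] (ROp^[2 * k] (QOp^[k] S))) := monotone_QOp (monotone_ROp.iterate 2 ih)
      _ = QOp (ROp^[2 * (k + 1)] (QOp^[k] S)) := by rw [← Function.iterate_add_apply]; ring_nf
      _ ⊆ ROp^[2 * (k + 1)] (QOp (QOp^[k] S)) := QOp_comp_ROp_iterate_le _ _
      _ = ROp^[2 * (k + 1)] (QOp^[k + 1] S) := by rw [Function.iterate_succ_apply']

lemma QOp_iterate_ROp_iterate_subset (k : ℕ) (S : Set Pt) :
    QOp^[k] (ROp^[2 * k] S) ⊆ RPlus^[k] S := by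
  induction k with
  | zero => exact subset_rfl
  | succ k ih =>
    calc QOp^[k + 1] (ROp^[2 * (k + 1)] S) = QOp (QOp^[k] (ROp^[2] (ROp^[2 * k] S))) := by
          rw [Function.iterate_succ_apply', ← Function.iterate_add_apply]; ring_nf
      _ ⊆ QOp (ROp^[2] (QOp^[k] (ROp^[2 * k] S))) :=
          monotone_QOp (monotone_QOp.iterate_comp_le_of_le (QOp_comp_ROp_iterate_le 2) k _)
      _ ⊆ QOp (ROp^[2] (RPlus^[k] S)) := monotone_QOp (monotone_ROp.iterate 2 ih)
      _ = RPlus^[k + 1] S := (Function.iterate_succ_apply' RPlus k S).symm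

def triangle (r : Pt) (n : ℕ) : Set Pt :=
  {p | r.1 ≤ p.1 ∧ r.2 ≤ p.2 ∧ p.1 + p.2 ≤ r.1 + r.2 + n}

lemma triangle_subset_QOp_iterate (r : Pt) (n : ℕ) : triangle r n ⊆ QOp^[n] {r} := by
  induction n with
  | zero =>
    intro p hp
    simp only [triangle, mem_ofPred_eq] at hp
    simp [Prod.ext_iff]
    omega
  | succ n ih =>
    intro p hp
    simp only [triangle, mem_ofPred_eq] at hp
    obtain ⟨q, hq, hpq⟩ : ∃ q ∈ triangle r n, p ∈ tile q := by
      by_cases hdiag : p.1 + p.2 ≤ r.1 + r.2 + n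
      · exact ⟨p, ⟨hp.1, hp.2.1, hdiag⟩, by simp [tile]⟩
      by_cases hcol : r.1 < p.1
      · exact ⟨p - (1, 0), by simp [triangle, mem_tile_iff]; omega⟩
      · exact ⟨p - (0, 1), by simp [triangle, mem_tile_iff]; omega⟩
    rw [Function.iterate_succ_apply', mem_QOp_iff]
    exact ⟨q, ih hq, hpq⟩

section Counting

open Finset.HasAntidiagonal (antidiagonal)

lemma two_mul_card_biUnion_antidiagonal (n : ℕ) :
    2 * ((Finset.range (n + 1)).biUnion antidiagonal).card = (n + 1) * (n + 2) := by
  have hdisj : (Finset.range (n + 1) : Set ℕ).PairwiseDisjoint antidiagonal := by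
    intro k _ l _ hkl
    simp only [Function.onFun, Finset.disjoint_left, Finset.HasAntidiagonal.mem_antidiagonal]
    omega
  rw [Finset.card_biUnion hdisj]
  simp only [Finset.Nat.card_antidiagonal]
  have gauss := Finset.sum_range_id_mul_two (n + 2)
  rw [Finset.sum_range_succ', add_zero, show n + 2 - 1 = n + 1 by omega] at gauss
  linarith

lemma triangle_eq_image (r : Pt) (n : ℕ) :
    triangle r n = (fun w : ℕ × ℕ => r + ((w.1 : ℤ), (w.2 : ℤ))) ''
      ((Finset.range (n + 1)).biUnion antidiagonal : Finset (ℕ × ℕ)) := by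
  ext p
  simp only [triangle, mem_ofPred_eq, mem_image, Finset.coe_biUnion, Finset.coe_range, mem_Iio,
    mem_iUnion, Finset.mem_coe, Finset.HasAntidiagonal.mem_antidiagonal, Prod.ext_iff,
    Prod.fst_add, Prod.snd_add]
  constructor
  · rintro ⟨h1, h2, h3⟩
    exact ⟨((p.1 - r.1).toNat, (p.2 - r.2).toNat), ⟨(p.1 - r.1 + (p.2 - r.2)).toNat, by omega,
      by omega⟩, by omega, by omega⟩
  · rintro ⟨w, ⟨k, hk, hw⟩, h1, h2⟩
    omega

lemma two_mul_encard_triangle (r : Pt) (n : ℕ) :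
    2 * (triangle r n).encard = ((n + 1) * (n + 2) : ℕ) := by
  have hinj : Function.Injective (fun w : ℕ × ℕ => r + ((w.1 : ℤ), (w.2 : ℤ))) := by
    intro w w' h
    simp only [add_right_inj, Prod.ext_iff, Nat.cast_inj] at h
    exact Prod.ext h.1 h.2
  rw [triangle_eq_image, hinj.encard_image, encard_coe_eq_coe_finsetCard,
    ← two_mul_card_biUnion_antidiagonal]
  push_cast
  rfl

end Counting

/-- Fatness lemma: if `S` is connected and `(R⁺)^{2i}(S) ≠ ∅` then
`(R⁺)^i(S)` has at least `i²/2` elements. -/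
theorem fatness (S : Set Pt) (i : ℕ) (hS : ConnectedIn S)
    (h : (RPlus^[2*i] S).Nonempty) :
    ((i^2 : ℕ) : ℕ∞) ≤ 2 * (RPlus^[i] S).encard := by
  obtain ⟨p, hp⟩ := h
  have hspan : SpanAtLeast S ((2 * i : ℕ) : ℤ) :=
    (((SpanAtLeast.of_nonempty ⟨p, RPlus_iterate_subset _ S hp⟩).of_ROp_iterate _).of_QOp_iterate
      _).of_le (by push_cast; omega)
  obtain ⟨r, hr⟩ := hS.ROp_iterate_nonempty _ hspan
  have htri : triangle r i ⊆ RPlus^[i] S :=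
    (triangle_subset_QOp_iterate r i).trans <|
      (monotone_QOp.iterate i (singleton_subset_iff.mpr hr)).trans
        (QOp_iterate_ROp_iterate_subset i S)
  calc ((i ^ 2 : ℕ) : ℕ∞) ≤ ((i + 1) * (i + 2) : ℕ) := by gcongr; nlinarith
    _ = 2 * (triangle r i).encard := (two_mul_encard_triangle r i).symm
    _ ≤ 2 * (RPlus^[i] S).encard := by gcongr
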